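/- Let k₁,k₂>0, K≥2, J(z)=k₁/z¹²−k₂/z⁶ for z>0 and +∞ for z≤0, J_j(z):=J(jz), J_CB:=Σ_{j=1}^K J_j, γ:=(2k₁/k₂)^{1/6}·((Σ_{j=1}^K j^{-12})/(Σ_{j=1}^K j^{-6}))^{1/6}, c_j:=−jJ'(jγ)/J'(γ), ψ_j(z):=J_j(z)+c_j J_1(z), and g_j(z):=+∞ for z≤0, ψ_j(z) for 0<z≤γ, ψ_j(γ) for z>γ (j=2,…,K). Define g_CB:ℝ→ℝ∪{+∞} by g_CB(z)=+∞ for z≤0, g_CB(z)=J_CB(z) for 0<z≤γ, and g_CB(z)=J_CB(γ) for z>γ. Then g_CB(z)=Σ_{j=2}^K g_j(z) for all z∈ℝ, g_CB is convex and lower semicontinuous with g_CB≤J_CB pointwise, and every convex lower semicontinuous h:ℝ→ℝ∪{+∞} with h≤J_CB pointwise satisfies h≤g_CB pointwise; i.e., g_CB is the lower semicontinuous convex envelope of J_CB. -/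

import Mathlib

/-!
On `(0, ∞)` the Cauchy–Born density is again of Lennard-Jones form,
`J_CB(z) = A z⁻¹² - B z⁻⁶` with `A = k₁ Σ j⁻¹²`, `B = k₂ Σ j⁻⁶`, and `γ` is characterized by
`B γ⁶ = 2 A`; hence `J_CB(z) = J_CB(γ) + A (z⁻⁶ - γ⁻⁶)²`. Truncating at `γ` replaces `z⁻⁶ - γ⁻⁶`
by its positive part `max z⁻⁶ γ⁻⁶ - γ⁻⁶`, a nonnegative convex function, so `g_CB` is convex on
`(0, ∞)`; it blows up at `0⁺`, so `g_CB` is even continuous as an `ℝ ∪ {+∞}`-valued function.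
Conversely, a convex minorant `h` of `J_CB` is bounded above on `[γ, ∞)`, where `J_CB ≤ 0`, hence
nonincreasing there, and `h z ≤ h γ ≤ J_CB(γ)` for `z ≥ γ`. The splitting `g_CB = Σ g_j` amounts
to `Σ_{j ≥ 2} c_j = 1`, which is `J_CB'(γ) = 0` read through the chain rule.
-/

open Filter Finset Set

noncomputable section

/-- The Lennard-Jones potential, extended by `+∞` on `(-∞,0]`. -/
def LJ (k₁ k₂ : ℝ) (z : ℝ) : EReal :=
  if 0 < z then ((k₁ / z ^ 12 - k₂ / z ^ 6 : ℝ) : EReal) else ⊤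

/-- The real-valued Lennard-Jones formula (used for derivatives on `(0,∞)`). -/
def LJr (k₁ k₂ : ℝ) (z : ℝ) : ℝ := k₁ / z ^ 12 - k₂ / z ^ 6

/-- The Cauchy–Born energy density `J_CB(z) = Σ_{j=1}^K J(jz)`, with values in `ℝ ∪ {+∞}`. -/
def JCB (k₁ k₂ : ℝ) (K : ℕ) (z : ℝ) : EReal := ∑ j ∈ Finset.Icc 1 K, LJ k₁ k₂ ((j : ℝ) * z)

/-- The unique minimizer `γ` of the Cauchy–Born energy density. -/
def gammaLJ (k₁ k₂ : ℝ) (K : ℕ) : ℝ :=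
  (2 * k₁ / k₂) ^ ((1 : ℝ) / 6) *
    ((∑ j ∈ Finset.Icc 1 K, 1 / (j : ℝ) ^ 12) /
      (∑ j ∈ Finset.Icc 1 K, 1 / (j : ℝ) ^ 6)) ^ ((1 : ℝ) / 6)

/-- The splitting coefficients `c_j := -j·J'(jγ)/J'(γ)`, `j = 2,…,K`. -/
def cLJ (k₁ k₂ : ℝ) (K : ℕ) (j : ℕ) : ℝ :=
  -((j : ℝ) * deriv (LJr k₁ k₂) ((j : ℝ) * gammaLJ k₁ k₂ K)) /
    deriv (LJr k₁ k₂) (gammaLJ k₁ k₂ K)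

/-- `ψ_j(z) = J_j(z) + c_j·J_1(z)`. -/
def psiLJ (k₁ k₂ : ℝ) (K j : ℕ) (z : ℝ) : EReal :=
  LJ k₁ k₂ ((j : ℝ) * z) + ((cLJ k₁ k₂ K j : ℝ) : EReal) * LJ k₁ k₂ z

/-- The lower semicontinuous convex envelope of `ψ_j`:
`g_j = +∞` on `(-∞,0]`, `= ψ_j` on `(0,γ]`, `= ψ_j(γ)` on `(γ,∞)`. -/
def gEnv (k₁ k₂ : ℝ) (K j : ℕ) (z : ℝ) : EReal :=
  if z ≤ 0 then ⊤
  else if z ≤ gammaLJ k₁ k₂ K then psiLJ k₁ k₂ K j z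
  else psiLJ k₁ k₂ K j (gammaLJ k₁ k₂ K)

/-- The candidate lower semicontinuous convex envelope of `J_CB`:
`g_CB = +∞` on `(-∞,0]`, `= J_CB` on `(0,γ]`, `= J_CB(γ)` on `(γ,∞)`. -/
def gCB (k₁ k₂ : ℝ) (K : ℕ) (z : ℝ) : EReal :=
  if z ≤ 0 then ⊤
  else if z ≤ gammaLJ k₁ k₂ K then JCB k₁ k₂ K z
  else JCB k₁ k₂ K (gammaLJ k₁ k₂ K)

/-- Convexity of an `ℝ ∪ {+∞}`-valued function on `ℝ`. -/
def ERealConvexOn (g : ℝ → EReal) : Prop :=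
  ∀ x y : ℝ, ∀ a b : ℝ, 0 ≤ a → 0 ≤ b → a + b = 1 →
    g (a * x + b * y) ≤ (a : EReal) * g x + (b : EReal) * g y

open Topology

lemma EReal.coe_finset_sum {ι : Type*} (s : Finset ι) (f : ι → ℝ) :
    ((∑ i ∈ s, f i : ℝ) : EReal) = ∑ i ∈ s, (f i : EReal) :=
  map_sum (⟨⟨Real.toEReal, EReal.coe_zero⟩, EReal.coe_add⟩ : ℝ →+ EReal) f s

lemma EReal.finset_sum_eq_top {ι : Type*} {s : Finset ι} (hs : s.Nonempty) {f : ι → EReal}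
    (h : ∀ i ∈ s, f i = ⊤) : ∑ i ∈ s, f i = ⊤ := by
  induction hs using Finset.Nonempty.cons_induction with
  | singleton a => simpa using h a
  | cons a s _ _ ih =>
    rw [Finset.sum_cons, h a (mem_cons_self a s), ih fun i hi => h i (mem_cons_of_mem hi)]
    rfl

namespace ERealConvexOn

lemma of_convexOn {s : Set ℝ} {φ : ℝ → ℝ} (hφ : ConvexOn ℝ s φ) {g : ℝ → EReal}
    (hg : ∀ z ∈ s, g z = φ z) (hg' : ∀ z ∉ s, g z = ⊤) : ERealConvexOn g := by
  intro x y a b ha hb hab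
  rcases ha.eq_or_lt with rfl | ha
  · obtain rfl : b = 1 := by linarith
    simp
  rcases hb.eq_or_lt with rfl | hb
  · obtain rfl : a = 1 := by linarith
    simp
  by_cases hx : x ∈ s <;> by_cases hy : y ∈ s
  · have hmem : a * x + b * y ∈ s := hφ.1 hx hy ha.le hb.le hab
    rw [hg _ hmem, hg x hx, hg y hy, ← EReal.coe_mul, ← EReal.coe_mul,
      ← EReal.coe_add, EReal.coe_le_coe_iff]
    exact hφ.2 hx hy ha.le hb.le hab
  all_goals simp [hg, hg', hx, hy, EReal.coe_mul_top_of_pos, ha, hb, ← EReal.coe_mul]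

/-- Write `y` as a convex combination of `x` and a far point `w`: the weight of `h w ≤ M`
tends to `0` as `w → ∞`, so `h y ≤ h x`. -/
lemma le_of_bddAbove {h : ℝ → EReal} (hh : ERealConvexOn h) {x y M : ℝ} (hxy : x < y)
    (hM : ∀ w, y < w → h w ≤ M) : h y ≤ h x := by
  by_contra! hlt
  obtain ⟨r, hxr, hry⟩ := EReal.lt_iff_exists_real_btwn.1 hlt
  obtain ⟨s, hrs, hsy⟩ := EReal.lt_iff_exists_real_btwn.1 hry
  have hbound : ∀ w, y < w → s - r < (y - x) * (M - r) / (w - x) := by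
    intro w hw
    have hwx : 0 < w - x := by linarith
    set q := (y - x) / (w - x)
    have hq0 : 0 ≤ q := div_nonneg (by linarith) hwx.le
    have hq1 : q ≤ 1 := (div_le_one hwx).2 (by linarith)
    have hy_eq : (1 - q) * x + q * w = y := by simp only [q]; field_simp; ring
    have hcomb := hh x w (1 - q) q (by linarith) hq0 (by ring)
    rw [hy_eq] at hcomb
    have hupper : h y ≤ (((1 - q) * r + q * M : ℝ) : EReal) := by
      rw [EReal.coe_add, EReal.coe_mul, EReal.coe_mul]
      refine hcomb.trans (add_le_add ?_ ?_)
      · exact mul_le_mul_of_nonneg_left hxr.le (EReal.coe_nonneg.2 (by linarith))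
      · exact mul_le_mul_of_nonneg_left (hM w hw) (EReal.coe_nonneg.2 hq0)
    have hsq : s < (1 - q) * r + q * M := EReal.coe_lt_coe_iff.1 (hsy.trans_le hupper)
    calc s - r < q * (M - r) := by linarith
      _ = (y - x) * (M - r) / (w - x) := by simp only [q]; ring
  have hlim : Tendsto (fun w => (y - x) * (M - r) / (w - x)) atTop (𝓝 0) :=
    tendsto_const_nhds.div_atTop (tendsto_atTop_add_const_right _ _ tendsto_id)
  have hgap : 0 < s - r := sub_pos.2 (EReal.coe_lt_coe_iff.1 hrs)
  obtain ⟨w, hw, hw'⟩ :=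
    ((eventually_gt_atTop y).and (hlim.eventually (eventually_lt_nhds hgap))).exists
  exact (hbound w hw).asymm hw'

end ERealConvexOn

lemma continuous_of_tendsto_nhdsGT_zero {φ : ℝ → ℝ} (hφ : ContinuousOn φ (Ioi 0))
    (hφ0 : Tendsto φ (𝓝[>] 0) atTop) {g : ℝ → EReal} (hpos : ∀ z, 0 < z → g z = φ z)
    (hnonpos : ∀ z, z ≤ 0 → g z = ⊤) : Continuous g := by
  rw [continuous_iff_continuousAt]
  intro x
  rcases lt_trichotomy x 0 with hx | rfl | hx
  · refine ContinuousAt.congr (f := fun _ => ⊤) continuousAt_const ?_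
    filter_upwards [Iio_mem_nhds hx] with z hz
    exact (hnonpos z hz.le).symm
  · rw [ContinuousAt, ← nhdsLE_sup_nhdsGT, tendsto_sup, hnonpos 0 le_rfl]
    constructor
    · refine tendsto_const_nhds.congr' ?_
      filter_upwards [self_mem_nhdsWithin] with z hz
      exact (hnonpos z hz).symm
    · refine (EReal.tendsto_coe_atTop.comp hφ0).congr' ?_
      filter_upwards [self_mem_nhdsWithin] with z hz
      exact (hpos z hz).symm
  · have := (continuous_coe_real_ereal.continuousAt.comp (hφ.continuousAt (Ioi_mem_nhds hx)))
    refine this.congr ?_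
    filter_upwards [Ioi_mem_nhds hx] with z hz
    exact (hpos z hz).symm

lemma hasDerivAt_LJr (a b : ℝ) {x : ℝ} (hx : x ≠ 0) :
    HasDerivAt (LJr a b) (6 * (b * x ^ 6 - 2 * a) / x ^ 13) x := by
  refine (((hasDerivAt_const x a).div (hasDerivAt_pow 12 x) (pow_ne_zero 12 hx)).sub
    ((hasDerivAt_const x b).div (hasDerivAt_pow 6 x) (pow_ne_zero 6 hx))).congr_deriv ?_
  field_simp
  ring

section LennardJones

variable {a b γ : ℝ}

lemma LJr_sub_LJr (hrel : b * γ ^ 6 = 2 * a) (hγ : γ ≠ 0) {z : ℝ} (hz : z ≠ 0) :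
    LJr a b z - LJr a b γ = a * ((z ^ 6)⁻¹ - (γ ^ 6)⁻¹) ^ 2 := by
  have hb : b = 2 * a / γ ^ 6 := eq_div_of_mul_eq (pow_ne_zero 6 hγ) hrel
  subst hb
  unfold LJr
  field_simp
  ring

lemma LJr_le_LJr (ha : 0 ≤ a) (hrel : b * γ ^ 6 = 2 * a) (hγ : γ ≠ 0) {z : ℝ}
    (hz : z ≠ 0) :    LJr a b γ ≤ LJr a b z := by
  have := LJr_sub_LJr hrel hγ hz
  nlinarith [mul_nonneg ha (sq_nonneg ((z ^ 6)⁻¹ - (γ ^ 6)⁻¹))]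

lemma LJr_nonpos (ha : 0 ≤ a) (hrel : b * γ ^ 6 = 2 * a) (hγ : 0 < γ) {w : ℝ}
    (hw : γ ≤ w) :    LJr a b w ≤ 0 := by
  have hw0 : 0 < w := hγ.trans_le hw
  have hb : 0 ≤ b := by nlinarith [pow_pos hγ 6]
  have hpow : γ ^ 6 ≤ w ^ 6 := pow_le_pow_left₀ hγ.le hw 6
  have heq : LJr a b w = (a - b * w ^ 6) / w ^ 12 := by unfold LJr; field_simp
  rw [heq]
  exact div_nonpos_of_nonpos_of_nonneg (by nlinarith) (by positivity)

lemma LJr_min_eq (hrel : b * γ ^ 6 = 2 * a) (hγ : 0 < γ) {z : ℝ} (hz : 0 < z) :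
    LJr a b (min z γ) = LJr a b γ + a * (max (z ^ 6)⁻¹ (γ ^ 6)⁻¹ - (γ ^ 6)⁻¹) ^ 2 := by
  rcases le_total z γ with hzγ | hγz
  · have hinv : (γ ^ 6)⁻¹ ≤ (z ^ 6)⁻¹ := by gcongr
    rw [min_eq_left hzγ, max_eq_left hinv, ← LJr_sub_LJr hrel hγ.ne' hz.ne']
    ring
  · have hinv : (z ^ 6)⁻¹ ≤ (γ ^ 6)⁻¹ := by gcongr
    rw [min_eq_right hγz, max_eq_right hinv]
    ring

lemma convexOn_LJr_min (ha : 0 ≤ a) (hrel : b * γ ^ 6 = 2 * a) (hγ : 0 < γ) :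
    ConvexOn ℝ (Ioi 0) fun z => LJr a b (min z γ) := by
  have hinv : ConvexOn ℝ (Ioi 0) fun z : ℝ => (z ^ 6)⁻¹ := by
    simpa using convexOn_zpow (𝕜 := ℝ) (-6)
  have hpos : ConvexOn ℝ (Ioi 0) fun z : ℝ => max (z ^ 6)⁻¹ (γ ^ 6)⁻¹ - (γ ^ 6)⁻¹ :=
    (hinv.sup (convexOn_const _ (convex_Ioi 0))).add_const _
  have hsq := (hpos.pow (fun _ _ => sub_nonneg.2 (le_max_right _ _)) 2).smul ha
  refine (hsq.add_const (LJr a b γ)).congr fun z hz => ?_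
  simp only [Pi.add_apply, Pi.pow_apply, smul_eq_mul]
  rw [LJr_min_eq hrel hγ hz]
  ring

lemma continuousOn_LJr_min (hγ : 0 < γ) :
    ContinuousOn (fun z => LJr a b (min z γ)) (Ioi 0) := fun _ hz =>
  (ContinuousAt.comp (g := LJr a b) (f := fun z => min z γ)
    (hasDerivAt_LJr a b (lt_min hz hγ).ne').continuousAt
    (continuous_id.min continuous_const).continuousAt).continuousWithinAt

lemma tendsto_LJr_min_nhdsGT_zero (ha : 0 < a) (hrel : b * γ ^ 6 = 2 * a) (hγ : 0 < γ) :
    Tendsto (fun z => LJr a b (min z γ)) (𝓝[>] 0) atTop := by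
  have hinv : Tendsto (fun z : ℝ => (z ^ 6)⁻¹) (𝓝[>] 0) atTop := by
    simpa only [Function.comp_def, inv_pow] using
      (tendsto_pow_atTop (n := 6) (by norm_num)).comp (tendsto_inv_nhdsGT_zero (𝕜 := ℝ))
  have hmax := tendsto_atTop_mono (fun z => le_max_left _ ((γ ^ 6)⁻¹)) hinv
  have hsq := (tendsto_pow_atTop (n := 2) (by norm_num)).comp
    (tendsto_atTop_add_const_right _ (-(γ ^ 6)⁻¹) hmax)
  refine (tendsto_atTop_add_const_left _ (LJr a b γ) (hsq.const_mul_atTop ha)).congr' ?_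
  filter_upwards [self_mem_nhdsWithin] with z hz
  rw [LJr_min_eq hrel hγ hz]
  simp [sub_eq_add_neg]

end LennardJones

lemma sum_Icc_one_eq_add_sum_Icc_two {M : Type*} [AddCommMonoid M] (f : ℕ → M) {K : ℕ}
    (hK : 1 ≤ K) : ∑ j ∈ Icc 1 K, f j = f 1 + ∑ j ∈ Icc 2 K, f j := by
  rw [← add_sum_Ioc_eq_sum_Icc hK, ← Finset.Icc_add_one_left_eq_Ioc]
  rfl

def latticeSum (p K : ℕ) : ℝ := ∑ j ∈ Icc 1 K, 1 / (j : ℝ) ^ p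

lemma latticeSum_pos (p : ℕ) {K : ℕ} (hK : 1 ≤ K) : 0 < latticeSum p K := by
  refine sum_pos (fun j hj => ?_) ⟨1, by simp [hK]⟩
  have : (1 : ℝ) ≤ j := by exact_mod_cast (mem_Icc.1 hj).1
  positivity

lemma latticeSum_lt_latticeSum {p q K : ℕ} (hpq : p < q) (hK : 2 ≤ K) :
    latticeSum q K < latticeSum p K := by
  refine sum_lt_sum (fun j hj => ?_) ⟨2, by simp [hK], ?_⟩
  · have : (1 : ℝ) ≤ j := by exact_mod_cast (mem_Icc.1 hj).1
    gcongr
  · gcongr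
    norm_num

lemma sum_LJr_mul (k₁ k₂ : ℝ) (K : ℕ) (z : ℝ) :
    ∑ j ∈ Icc 1 K, LJr k₁ k₂ (j * z) =
      LJr (k₁ * latticeSum 12 K) (k₂ * latticeSum 6 K) z := by
  simp only [LJr, latticeSum, sum_sub_distrib, mul_sum, sum_div, mul_pow]
  congr 1 <;> refine sum_congr rfl fun j _ => ?_ <;> field_simp

section CauchyBorn

variable {k₁ k₂ : ℝ} {K : ℕ}

lemma gammaLJ_pow_six (hk₁ : 0 ≤ k₁) (hk₂ : 0 ≤ k₂) (hK : 1 ≤ K) :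
    gammaLJ k₁ k₂ K ^ 6 = 2 * k₁ / k₂ * (latticeSum 12 K / latticeSum 6 K) := by
  have h1 : 0 ≤ 2 * k₁ / k₂ := by positivity
  have h2 : 0 ≤ latticeSum 12 K / latticeSum 6 K :=
    (div_pos (latticeSum_pos 12 hK) (latticeSum_pos 6 hK)).le
  change ((2 * k₁ / k₂) ^ ((1 : ℝ) / 6) *
    (latticeSum 12 K / latticeSum 6 K) ^ ((1 : ℝ) / 6)) ^ 6 = _
  rw [← Real.mul_rpow h1 h2, one_div]
  exact_mod_cast Real.rpow_inv_natCast_pow (mul_nonneg h1 h2) (by norm_num : 6 ≠ 0)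

lemma gammaLJ_pos (hk₁ : 0 < k₁) (hk₂ : 0 < k₂) (hK : 1 ≤ K) : 0 < gammaLJ k₁ k₂ K :=
  mul_pos (Real.rpow_pos_of_pos (by positivity) _)
    (Real.rpow_pos_of_pos (div_pos (latticeSum_pos 12 hK) (latticeSum_pos 6 hK)) _)

lemma mul_gammaLJ_pow_six (hk₁ : 0 ≤ k₁) (hk₂ : 0 < k₂) (hK : 1 ≤ K) :
    k₂ * latticeSum 6 K * gammaLJ k₁ k₂ K ^ 6 = 2 * (k₁ * latticeSum 12 K) := by
  rw [gammaLJ_pow_six hk₁ hk₂.le hK]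
  have := (latticeSum_pos 6 hK).ne'
  field_simp

lemma deriv_LJr_gammaLJ_neg (hk₁ : 0 < k₁) (hk₂ : 0 < k₂) (hK : 2 ≤ K) :
    deriv (LJr k₁ k₂) (gammaLJ k₁ k₂ K) < 0 := by
  have hK1 : 1 ≤ K := by omega
  have hγ := gammaLJ_pos hk₁ hk₂ hK1
  have hratio : latticeSum 12 K / latticeSum 6 K < 1 :=
    (div_lt_one (latticeSum_pos 6 hK1)).2 (latticeSum_lt_latticeSum (by norm_num) hK)
  have hlt : k₂ * gammaLJ k₁ k₂ K ^ 6 < 2 * k₁ := by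
    have hcancel : k₂ * (2 * k₁ / k₂ * (latticeSum 12 K / latticeSum 6 K)) =
        2 * k₁ * (latticeSum 12 K / latticeSum 6 K) := by field_simp
    rw [gammaLJ_pow_six hk₁.le hk₂.le hK1, hcancel]
    nlinarith
  rw [(hasDerivAt_LJr k₁ k₂ hγ.ne').deriv]
  exact div_neg_of_neg_of_pos (by linarith) (by positivity)

/-- The chain rule turns `J_CB'(γ) = 0` into `Σ_j j J'(jγ) = 0`. -/
lemma sum_mul_deriv_LJr_eq_zero (hk₁ : 0 < k₁) (hk₂ : 0 < k₂) (hK : 1 ≤ K) :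
    ∑ j ∈ Icc 1 K, (j : ℝ) * deriv (LJr k₁ k₂) (j * gammaLJ k₁ k₂ K) = 0 := by
  have hγ := gammaLJ_pos hk₁ hk₂ hK
  have hderiv : HasDerivAt (fun z => ∑ j ∈ Icc 1 K, LJr k₁ k₂ (j * z))
      (∑ j ∈ Icc 1 K, (j : ℝ) * deriv (LJr k₁ k₂) (j * gammaLJ k₁ k₂ K))
      (gammaLJ k₁ k₂ K) := by
    refine HasDerivAt.fun_sum fun j hj => ?_
    have hjγ : (j : ℝ) * gammaLJ k₁ k₂ K ≠ 0 :=
      (mul_pos (Nat.cast_pos.2 (mem_Icc.1 hj).1) hγ).ne'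
    refine ((hasDerivAt_LJr k₁ k₂ hjγ).differentiableAt.hasDerivAt.comp _
      ((hasDerivAt_id (gammaLJ k₁ k₂ K)).const_mul (j : ℝ))).congr_deriv ?_
    ring
  simp only [sum_LJr_mul] at hderiv
  have hmin :
      IsLocalMin (LJr (k₁ * latticeSum 12 K) (k₂ * latticeSum 6 K)) (gammaLJ k₁ k₂ K) :=
    (eventually_ne_nhds hγ.ne').mono fun z hz =>
      LJr_le_LJr (mul_pos hk₁ (latticeSum_pos 12 hK)).le (mul_gammaLJ_pow_six hk₁.le hk₂ hK)
        hγ.ne' hz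
  exact hmin.hasDerivAt_eq_zero hderiv

lemma sum_cLJ (hk₁ : 0 < k₁) (hk₂ : 0 < k₂) (hK : 2 ≤ K) :
    ∑ j ∈ Icc 2 K, cLJ k₁ k₂ K j = 1 := by
  have h := sum_mul_deriv_LJr_eq_zero hk₁ hk₂ (by omega : 1 ≤ K)
  rw [sum_Icc_one_eq_add_sum_Icc_two _ (by omega)] at h
  simp only [cLJ, ← sum_div, sum_neg_distrib]
  rw [div_eq_one_iff_eq (deriv_LJr_gammaLJ_neg hk₁ hk₂ hK).ne]
  norm_num at h
  linarith

lemma LJ_of_pos {z : ℝ} (hz : 0 < z) : LJ k₁ k₂ z = LJr k₁ k₂ z := if_pos hz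

lemma LJ_of_nonpos {z : ℝ} (hz : z ≤ 0) : LJ k₁ k₂ z = ⊤ := if_neg hz.not_gt

lemma JCB_of_pos {z : ℝ} (hz : 0 < z) :
    JCB k₁ k₂ K z = LJr (k₁ * latticeSum 12 K) (k₂ * latticeSum 6 K) z := by
  rw [← sum_LJr_mul, EReal.coe_finset_sum]
  exact sum_congr rfl fun j hj => LJ_of_pos (mul_pos (Nat.cast_pos.2 (mem_Icc.1 hj).1) hz)

lemma JCB_of_nonpos (hK : 1 ≤ K) {z : ℝ} (hz : z ≤ 0) : JCB k₁ k₂ K z = ⊤ :=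
  EReal.finset_sum_eq_top ⟨1, by simp [hK]⟩ fun j _ =>
    LJ_of_nonpos (mul_nonpos_of_nonneg_of_nonpos (Nat.cast_nonneg j) hz)

lemma gCB_of_nonpos {z : ℝ} (hz : z ≤ 0) : gCB k₁ k₂ K z = ⊤ := if_pos hz

lemma gCB_of_pos {z : ℝ} (hz : 0 < z) :
    gCB k₁ k₂ K z = JCB k₁ k₂ K (min z (gammaLJ k₁ k₂ K)) := by
  rw [gCB, if_neg hz.not_ge, min_def, apply_ite (JCB k₁ k₂ K)]

lemma gEnv_of_nonpos {j : ℕ} {z : ℝ} (hz : z ≤ 0) : gEnv k₁ k₂ K j z = ⊤ := if_pos hz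

lemma gEnv_of_pos {j : ℕ} {z : ℝ} (hz : 0 < z) :
    gEnv k₁ k₂ K j z = psiLJ k₁ k₂ K j (min z (gammaLJ k₁ k₂ K)) := by
  rw [gEnv, if_neg hz.not_ge, min_def, apply_ite (psiLJ k₁ k₂ K j)]

lemma sum_psiLJ (hk₁ : 0 < k₁) (hk₂ : 0 < k₂) (hK : 2 ≤ K) {w : ℝ} (hw : 0 < w) :
    ∑ j ∈ Icc 2 K, psiLJ k₁ k₂ K j w = JCB k₁ k₂ K w := by
  have hpsi : ∀ j ∈ Finset.Icc 2 K,
      psiLJ k₁ k₂ K j w =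
        ((LJr k₁ k₂ (j * w) + cLJ k₁ k₂ K j * LJr k₁ k₂ w : ℝ) : EReal) := by
    intro j hj
    have hj : (0 : ℝ) < j := Nat.cast_pos.2 (by have := (mem_Icc.1 hj).1; omega)
    rw [psiLJ, LJ_of_pos (mul_pos hj hw), LJ_of_pos hw]
    norm_cast
  rw [sum_congr rfl hpsi, ← EReal.coe_finset_sum, JCB_of_pos hw, ← sum_LJr_mul, sum_add_distrib,
    ← sum_mul, sum_cLJ hk₁ hk₂ hK, sum_Icc_one_eq_add_sum_Icc_two _ (by omega : 1 ≤ K),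
    Nat.cast_one, one_mul, one_mul, add_comm]

lemma gCB_eq_sum_gEnv (hk₁ : 0 < k₁) (hk₂ : 0 < k₂) (hK : 2 ≤ K) (z : ℝ) :
    gCB k₁ k₂ K z = ∑ j ∈ Icc 2 K, gEnv k₁ k₂ K j z := by
  rcases le_or_gt z 0 with hz | hz
  · rw [gCB_of_nonpos hz,
      EReal.finset_sum_eq_top ⟨2, by simp [hK]⟩ fun _ _ => gEnv_of_nonpos hz]
  · have hγ := gammaLJ_pos hk₁ hk₂ (by omega : 1 ≤ K)
    rw [gCB_of_pos hz, ← sum_psiLJ hk₁ hk₂ hK (lt_min hz hγ)]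
    exact sum_congr rfl fun _ _ => (gEnv_of_pos hz).symm

lemma gCB_eq_LJr_min (hk₁ : 0 < k₁) (hk₂ : 0 < k₂) (hK : 1 ≤ K) {z : ℝ} (hz : 0 < z) :
    gCB k₁ k₂ K z =
      LJr (k₁ * latticeSum 12 K) (k₂ * latticeSum 6 K) (min z (gammaLJ k₁ k₂ K)) := by
  rw [gCB_of_pos hz, JCB_of_pos (lt_min hz (gammaLJ_pos hk₁ hk₂ hK))]

lemma gCB_le_JCB (hk₁ : 0 < k₁) (hk₂ : 0 < k₂) (hK : 1 ≤ K) (z : ℝ) :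
    gCB k₁ k₂ K z ≤ JCB k₁ k₂ K z := by
  rcases le_or_gt z 0 with hz | hz
  · rw [gCB_of_nonpos hz, JCB_of_nonpos hK hz]
  rw [gCB_eq_LJr_min hk₁ hk₂ hK hz, JCB_of_pos hz, EReal.coe_le_coe_iff]
  rcases le_total z (gammaLJ k₁ k₂ K) with hzγ | hγz
  · rw [min_eq_left hzγ]
  · rw [min_eq_right hγz]
    exact LJr_le_LJr (mul_pos hk₁ (latticeSum_pos 12 hK)).le
      (mul_gammaLJ_pow_six hk₁.le hk₂ hK) (gammaLJ_pos hk₁ hk₂ hK).ne' hz.ne'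

lemma le_gCB_of_convex (hk₁ : 0 < k₁) (hk₂ : 0 < k₂) (hK : 1 ≤ K) {h : ℝ → EReal}
    (hh : ERealConvexOn h) (hle : ∀ z, h z ≤ JCB k₁ k₂ K z) (z : ℝ) :
    h z ≤ gCB k₁ k₂ K z := by
  rcases le_or_gt z 0 with hz | hz
  · rw [gCB_of_nonpos hz]
    exact le_top
  have hγ := gammaLJ_pos hk₁ hk₂ hK
  rw [gCB_of_pos hz]
  rcases le_or_gt z (gammaLJ k₁ k₂ K) with hzγ | hγz
  · rw [min_eq_left hzγ]
    exact hle z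
  rw [min_eq_right hγz.le]
  refine (hh.le_of_bddAbove hγz (M := 0) fun w hw => ?_).trans (hle _)
  refine (hle w).trans ?_
  rw [JCB_of_pos (hz.trans hw), EReal.coe_le_coe_iff]
  exact LJr_nonpos (mul_pos hk₁ (latticeSum_pos 12 hK)).le (mul_gammaLJ_pow_six hk₁.le hk₂ hK)
    hγ (hγz.trans hw).le

lemma eRealConvexOn_gCB (hk₁ : 0 < k₁) (hk₂ : 0 < k₂) (hK : 1 ≤ K) :
    ERealConvexOn (gCB k₁ k₂ K) :=
  ERealConvexOn.of_convexOn
    (convexOn_LJr_min (mul_pos hk₁ (latticeSum_pos 12 hK)).le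
      (mul_gammaLJ_pow_six hk₁.le hk₂ hK) (gammaLJ_pos hk₁ hk₂ hK))
    (fun _ hz => gCB_eq_LJr_min hk₁ hk₂ hK hz) fun _ hz => gCB_of_nonpos (not_lt.1 hz)

lemma continuous_gCB (hk₁ : 0 < k₁) (hk₂ : 0 < k₂) (hK : 1 ≤ K) :
    Continuous (gCB k₁ k₂ K) :=
  continuous_of_tendsto_nhdsGT_zero (continuousOn_LJr_min (gammaLJ_pos hk₁ hk₂ hK))
    (tendsto_LJr_min_nhdsGT_zero (mul_pos hk₁ (latticeSum_pos 12 hK))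
      (mul_gammaLJ_pow_six hk₁.le hk₂ hK) (gammaLJ_pos hk₁ hk₂ hK))
    (fun _ hz => gCB_eq_LJr_min hk₁ hk₂ hK hz) fun _ hz => gCB_of_nonpos hz

end CauchyBorn

/-- `g_CB = Σ_{j=2}^K g_j` pointwise, `g_CB` is convex and lower
semicontinuous with `g_CB ≤ J_CB`, and it dominates every convex lower semicontinuous
minorant of `J_CB`; i.e. `g_CB` is the lower semicontinuous convex envelope `J_CB**`. -/
theorem envelope_of_cauchyBorn (k₁ k₂ : ℝ) (hk₁ : 0 < k₁) (hk₂ : 0 < k₂)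
    (K : ℕ) (hK : 2 ≤ K) :
    (∀ z : ℝ, gCB k₁ k₂ K z = ∑ j ∈ Finset.Icc 2 K, gEnv k₁ k₂ K j z) ∧
    ERealConvexOn (gCB k₁ k₂ K) ∧
    LowerSemicontinuous (gCB k₁ k₂ K) ∧
    (∀ z : ℝ, gCB k₁ k₂ K z ≤ JCB k₁ k₂ K z) ∧
    (∀ h : ℝ → EReal, ERealConvexOn h → LowerSemicontinuous h →
      (∀ z : ℝ, h z ≤ JCB k₁ k₂ K z) → ∀ z : ℝ, h z ≤ gCB k₁ k₂ K z) := by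
  have hK1 : 1 ≤ K := by omega
  exact ⟨gCB_eq_sum_gEnv hk₁ hk₂ hK, eRealConvexOn_gCB hk₁ hk₂ hK1,
    (continuous_gCB hk₁ hk₂ hK1).lowerSemicontinuous, gCB_le_JCB hk₁ hk₂ hK1,
    fun _ hh _ hle => le_gCB_of_convex hk₁ hk₂ hK1 hh hle⟩
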